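/- Let 0 < 𝔭_f^- < 𝔭_f^+ < κ < 𝔭_c^- < 𝔭_c^+. There exist C > 0, δ > 0 and ε̄ > 0, independent of ε, such that for every 0 < ε < ε̄ the following holds (interaction of the interface with a small wave coming from the left, congested domain). Let U^ℓ, U^m be states with pressures in [𝔭_c^-, 𝔭_c^+] (congested) and U^r a state with pressure in [𝔭_f^-, 𝔭_f^+] (free), such that U^m = Φ₂^ε(σ')(U^ℓ) with |σ'| < δ and U^r = Φ₂^ε(σ̄'')(U^m) with σ̄'' < 0 (a 2-shock interface of strength σ̄''). Then there exists a unique pair (σ₁⁺, σ̄₂⁺) with σ̄₂⁺ < 0 such that U^r = Φ₂^ε(σ̄₂⁺)(Φ₁^ε(σ₁⁺)(U^ℓ)), the intermediate state Φ₁^ε(σ₁⁺)(U^ℓ) has pressure greater than κ, and |σ₁⁺| + |σ̄₂⁺ − σ̄''| ≤ C |σ'|. -/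

import Mathlib

open Set Filter MeasureTheory Topology

/-- The singular pressure law `𝒫_ε(τ) = κ τ^{-γᵢ} + ε (τ-1)^{-γ_c}`. -/
noncomputable def Pe (κ γi γc ε τ : ℝ) : ℝ := κ * τ ^ (-γi) + ε * (τ - 1) ^ (-γc)

/-- Forward wave map of the first family (1-shock for `σ ≥ 0`, 1-rarefaction for `σ < 0`)
for the p-system with specific-volume law `Tf`, in the variables `(p,u)`. -/
noncomputable def Phi1 (Tf : ℝ → ℝ) (σ : ℝ) (U : ℝ × ℝ) : ℝ × ℝ :=
  if 0 ≤ σ then (U.1 + σ, U.2 - Real.sqrt ((Tf U.1 - Tf (U.1 + σ)) * σ))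
  else (U.1 + σ, U.2 - ∫ ξ in U.1..(U.1 + σ), Real.sqrt (-deriv Tf ξ))

/-- Forward wave map of the second family (2-shock for `σ < 0`, 2-rarefaction for `σ > 0`)
for the p-system with specific-volume law `Tf`, in the variables `(p,u)`. -/
noncomputable def Phi2 (Tf : ℝ → ℝ) (σ : ℝ) (U : ℝ × ℝ) : ℝ × ℝ :=
  if σ < 0 then (U.1 + σ, U.2 - Real.sqrt ((Tf (U.1 + σ) - Tf U.1) * (-σ)))
  else (U.1 + σ, U.2 + ∫ ξ in U.1..(U.1 + σ), Real.sqrt (-deriv Tf ξ))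

/-!
For small `ε` the volume law `𝒯_ε` is Lipschitz on the congested region `[κ, ∞)`, and its values
there stay a fixed distance below its values on the free band, with constants independent of `ε`.
Fix `U^ℓ` and the free pressure `p_r`. The velocity reached from `U^ℓ` by a 1-wave of strength `t`
followed by the 2-shock down to `p_r` is strictly decreasing in `t`: the 1-wave velocity is
nonincreasing, and the volume gap makes the squared shock drop grow at least linearly, so on a
bounded range of pressures its slope is bounded below. At `t = 0` this velocity differs from `u_r`
by `O(|σ'|)`, since both wave curves are Lipschitz there. The intermediate value theorem then gives
the unique `σ₁⁺ = O(|σ'|)`, and `σ̄₂⁺ = p_r - p_ℓ - σ₁⁺`.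
-/

lemma sub_div_le_sqrt_sub_sqrt {x y B : ℝ} (hx : 0 ≤ x) (hxy : x ≤ y) (hyB : y ≤ B) :
    (y - x) / (2 * √B) ≤ √y - √x := by
  have hsx := Real.sq_sqrt hx
  have hsy := Real.sq_sqrt (hx.trans hxy)
  have hxy' : √x ≤ √y := Real.sqrt_le_sqrt hxy
  have hyB' : √y ≤ √B := Real.sqrt_le_sqrt hyB
  rcases (Real.sqrt_nonneg B).eq_or_lt with hB | hB
  · rw [← hB, mul_zero, div_zero]
    linarith
  rw [div_le_iff₀ (by positivity)]
  nlinarith [Real.sqrt_nonneg x]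

lemma abs_sqrt_sub_sqrt_le {x y b : ℝ} (hb : 0 < b) (hx : b ≤ x) (hy : b ≤ y) :
    |√y - √x| ≤ |y - x| / (2 * √b) := by
  have hsx := Real.sq_sqrt (hb.le.trans hx)
  have hsy := Real.sq_sqrt (hb.le.trans hy)
  have hbx : √b ≤ √x := Real.sqrt_le_sqrt hx
  have hby : √b ≤ √y := Real.sqrt_le_sqrt hy
  have hb' : 0 < √b := Real.sqrt_pos.2 hb
  rw [le_div_iff₀ (by positivity), show y - x = (√y - √x) * (√y + √x) by
    linear_combination hsx - hsy, abs_mul, abs_of_pos (by linarith : 0 < √y + √x)]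
  exact mul_le_mul_of_nonneg_left (by linarith) (abs_nonneg _)

lemma exists_eq_of_mul_sub_le_sub {f : ℝ → ℝ} {a r c y : ℝ} (hc : 0 < c)
    (hf : ContinuousOn f (Icc (a - r) (a + r)))
    (hslope : ∀ u ∈ Icc (a - r) (a + r), ∀ v ∈ Icc (a - r) (a + r), u ≤ v →
      c * (v - u) ≤ f u - f v)
    (hy : |y - f a| ≤ c * r) :
    ∃ t ∈ Icc (a - r) (a + r), f t = y ∧ c * |t - a| ≤ |y - f a| := by
  have hr : 0 ≤ r := nonneg_of_mul_nonneg_right ((abs_nonneg _).trans hy) hc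
  have hl : a - r ∈ Icc (a - r) (a + r) := ⟨le_rfl, by linarith⟩
  have hm : a ∈ Icc (a - r) (a + r) := ⟨by linarith, by linarith⟩
  have hu : a + r ∈ Icc (a - r) (a + r) := ⟨by linarith, le_rfl⟩
  have hfl := hslope _ hl _ hm (by linarith)
  have hfu := hslope _ hm _ hu (by linarith)
  obtain ⟨t, ht, hft⟩ := intermediate_value_Icc' (by linarith) hf
    (show y ∈ Icc (f (a + r)) (f (a - r)) from
      ⟨by linarith [(abs_le.1 hy).1], by linarith [(abs_le.1 hy).2]⟩)
  refine ⟨t, ht, hft, ?_⟩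
  rw [← hft]
  rcases le_total t a with hta | hat
  · have := hslope _ ht _ hm hta
    rw [abs_of_nonpos (sub_nonpos.2 hta),
      abs_of_nonneg (by linarith [mul_nonneg hc.le (sub_nonneg.2 hta)])]
    linarith
  · have := hslope _ hm _ ht hat
    rw [abs_of_nonneg (sub_nonneg.2 hat),
      abs_of_nonpos (by linarith [mul_nonneg hc.le (sub_nonneg.2 hat)])]
    linarith

/-- `T` is the inverse `𝒯_ε` of the pressure law `𝒫_ε`. -/
def IsPeInverse (κ γi γc ε : ℝ) (T : ℝ → ℝ) : Prop :=
  ∀ p > (0:ℝ), 1 < T p ∧ Pe κ γi γc ε (T p) = p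

section PressureLaw

variable {κ γi γc ε : ℝ}

lemma lt_Pe (hε : 0 < ε) {τ : ℝ} (hτ : 1 < τ) : κ * τ ^ (-γi) < Pe κ γi γc ε τ :=
  lt_add_of_pos_right _ (mul_pos hε (Real.rpow_pos_of_pos (sub_pos.2 hτ) _))

lemma Pe_pos (hκ : 0 < κ) (hε : 0 < ε) {τ : ℝ} (hτ : 1 < τ) : 0 < Pe κ γi γc ε τ :=
  (mul_pos hκ (Real.rpow_pos_of_pos (by linarith) _)).trans (lt_Pe hε hτ)

lemma Pe_strictAntiOn (hκ : 0 < κ) (hγi : 0 < γi) (hγc : 0 < γc) (hε : 0 < ε) :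
    StrictAntiOn (Pe κ γi γc ε) (Ioi 1) := by
  intro τ (hτ : 1 < τ) τ' _ hττ'
  have hi := Real.rpow_lt_rpow_of_neg (by linarith) hττ' (neg_lt_zero.2 hγi)
  have hc := Real.rpow_lt_rpow_of_neg (sub_pos.2 hτ) (sub_lt_sub_right hττ' 1) (neg_lt_zero.2 hγc)
  exact add_lt_add (mul_lt_mul_of_pos_left hi hκ) (mul_lt_mul_of_pos_left hc hε)

lemma hasDerivAt_Pe {τ : ℝ} (hτ : 1 < τ) :
    HasDerivAt (Pe κ γi γc ε)
      (-(κ * γi * τ ^ (-γi - 1) + ε * γc * (τ - 1) ^ (-γc - 1))) τ := by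
  have hi : HasDerivAt (fun x : ℝ => x ^ (-γi)) (-γi * τ ^ (-γi - 1)) τ :=
    Real.hasDerivAt_rpow_const (Or.inl (by linarith))
  have hsub : HasDerivAt (fun x : ℝ => x - 1) 1 τ := (hasDerivAt_id τ).sub_const 1
  have hc : HasDerivAt (fun x : ℝ => (x - 1) ^ (-γc)) (1 * -γc * (τ - 1) ^ (-γc - 1)) τ :=
    hsub.rpow_const (Or.inl (sub_ne_zero.2 hτ.ne'))
  exact ((hi.const_mul κ).add (hc.const_mul ε)).congr_deriv (by ring)

lemma eventually_Pe_lt {τ y : ℝ} (h : κ * τ ^ (-γi) < y) :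
    ∀ᶠ ε in 𝓝 0, Pe κ γi γc ε τ < y := by
  have hcont : Continuous fun ε => Pe κ γi γc ε τ := by unfold Pe; fun_prop
  exact hcont.continuousAt.eventually_lt continuousAt_const (by simpa [Pe] using h)

end PressureLaw

namespace IsPeInverse

variable {κ γi γc ε : ℝ} {T : ℝ → ℝ} (hκ : 0 < κ) (hγi : 0 < γi) (hγc : 0 < γc) (hε : 0 < ε)
  (hT : IsPeInverse κ γi γc ε T)
include hκ hγi hγc hε hT

lemma lt_iff_Pe_lt {p τ : ℝ} (hp : 0 < p) (hτ : 1 < τ) : T p < τ ↔ Pe κ γi γc ε τ < p := by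
  conv_rhs => rw [← (hT p hp).2]
  exact ((Pe_strictAntiOn hκ hγi hγc hε).lt_iff_gt hτ (hT p hp).1).symm

lemma lt_iff_lt_Pe {p τ : ℝ} (hp : 0 < p) (hτ : 1 < τ) : τ < T p ↔ p < Pe κ γi γc ε τ := by
  conv_rhs => rw [← (hT p hp).2]
  exact ((Pe_strictAntiOn hκ hγi hγc hε).lt_iff_gt (hT p hp).1 hτ).symm

lemma apply_Pe {τ : ℝ} (hτ : 1 < τ) : T (Pe κ γi γc ε τ) = τ := by
  have hp := Pe_pos (γi := γi) (γc := γc) hκ hε hτ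
  exact (Pe_strictAntiOn hκ hγi hγc hε).injOn (hT _ hp).1 hτ (hT _ hp).2

lemma strictAntiOn : StrictAntiOn T (Ioi 0) := fun p (hp : 0 < p) _ _ hpp' =>
  (hT.lt_iff_Pe_lt hκ hγi hγc hε (hp.trans hpp') (hT p hp).1).2 ((hT p hp).2.symm ▸ hpp')

/-- `T` is monotone with image `Ioi 1`, an open set: this forces continuity. -/
lemma continuousAt {p : ℝ} (hp : 0 < p) : ContinuousAt T p := by
  have hmono : MonotoneOn (fun x => -T x) (Ioi 0) := fun x hx y _ hxy =>
    neg_le_neg ((hT.strictAntiOn hκ hγi hγc hε).antitoneOn hx ‹_› hxy)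
  have himage : Iio (-1) ⊆ (fun x => -T x) '' Ioi 0 := fun y (hy : y < -1) =>
    ⟨Pe κ γi γc ε (-y), Pe_pos hκ hε (by linarith),
      by simp [hT.apply_Pe hκ hγi hγc hε (by linarith : (1:ℝ) < -y)]⟩
  have := continuousAt_of_monotoneOn_of_image_mem_nhds hmono (Ioi_mem_nhds hp)
    (mem_of_superset (Iio_mem_nhds (by linarith [(hT p hp).1])) himage)
  simpa [Pi.neg_def] using this.neg

lemma hasDerivAt {p : ℝ} (hp : 0 < p) :
    HasDerivAt T (-(κ * γi * T p ^ (-γi - 1) + ε * γc * (T p - 1) ^ (-γc - 1)))⁻¹ p := by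
  have hτ := (hT p hp).1
  refine (hasDerivAt_Pe hτ).of_local_left_inverse (hT.continuousAt hκ hγi hγc hε hp) ?_ ?_
  · have := Real.rpow_pos_of_pos (by linarith : (0:ℝ) < T p) (-γi - 1)
    have := Real.rpow_pos_of_pos (sub_pos.2 hτ) (-γc - 1)
    exact neg_ne_zero.2 (by positivity)
  · filter_upwards [Ioi_mem_nhds hp] with y hy using (hT y hy).2

lemma deriv_mem_Icc {p B : ℝ} (hp : 0 < p) (hB : T p ≤ B) :
    deriv T p ∈ Icc (-(κ * γi * B ^ (-γi - 1))⁻¹) 0 := by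
  have hτ := (hT p hp).1
  have hB0 : 0 < κ * γi * B ^ (-γi - 1) := by
    have := Real.rpow_pos_of_pos (by linarith : (0:ℝ) < B) (-γi - 1); positivity
  have hle : κ * γi * B ^ (-γi - 1) ≤
      κ * γi * T p ^ (-γi - 1) + ε * γc * (T p - 1) ^ (-γc - 1) := by
    have := Real.rpow_le_rpow_of_nonpos (by linarith) hB (by linarith : -γi - 1 ≤ 0)
    have := Real.rpow_pos_of_pos (sub_pos.2 hτ) (-γc - 1)
    have : 0 ≤ ε * γc * (T p - 1) ^ (-γc - 1) := by positivity
    nlinarith [mul_pos hκ hγi]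
  rw [(hT.hasDerivAt hκ hγi hγc hε hp).deriv, inv_neg]
  exact ⟨neg_le_neg (inv_anti₀ hB0 hle), neg_nonpos.2 (inv_nonneg.2 (hB0.le.trans hle))⟩

end IsPeInverse

/-- Bounds on `𝒯_ε` that hold uniformly in small `ε`. -/
structure FreeCongestedBounds (T : ℝ → ℝ) (κ pf1 pf2 K m M : ℝ) : Prop where
  differentiableAt : ∀ x, κ ≤ x → DifferentiableAt ℝ T x
  deriv_mem : ∀ x, κ ≤ x → deriv T x ∈ Icc (-K) 0
  sub_mem : ∀ x, κ ≤ x → ∀ q ∈ Icc pf1 pf2, T q - T x ∈ Icc m M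

lemma exists_freeCongestedBounds {κ γi γc pf1 pf2 : ℝ} (hκ : 0 < κ) (hγi : 0 < γi)
    (hγc : 0 < γc) (hpf1 : 0 < pf1) (hpf2 : pf2 < κ) :
    ∃ K m M : ℝ, 0 ≤ K ∧ 0 < m ∧ 0 < M ∧ ∀ᶠ ε in 𝓝[>] 0, ∀ T : ℝ → ℝ, IsPeInverse κ γi γc ε T →
      FreeCongestedBounds T κ pf1 pf2 K m M := by
  have hcont : ContinuousAt (fun τ : ℝ => κ * τ ^ (-γi)) 1 :=
    continuousAt_const.mul (Real.continuousAt_rpow_const _ _ (Or.inl one_ne_zero))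
  have hnear : ∀ᶠ τ in 𝓝[>] (1:ℝ), pf2 < κ * τ ^ (-γi) :=
    nhdsWithin_le_nhds (hcont.eventually (lt_mem_nhds (by simpa using hpf2)))
  obtain ⟨τ0, hτ0pf2, hτ0 : 1 < τ0⟩ := (hnear.and self_mem_nhdsWithin).exists
  obtain ⟨τ2, hτ2pf1, hτ2⟩ : ∃ τ2, κ * τ2 ^ (-γi) < pf1 ∧ 1 < τ2 :=
    ((((tendsto_rpow_neg_atTop hγi).const_mul κ).eventually
      (gt_mem_nhds (by simpa using hpf1))).and (eventually_gt_atTop 1)).exists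
  obtain ⟨τ1, hτ1, hτ10⟩ := exists_between hτ0
  have hτ1κ : κ * τ1 ^ (-γi) < κ :=
    mul_lt_of_lt_one_right hκ (Real.rpow_lt_one_of_one_lt_of_neg hτ1 (neg_lt_zero.2 hγi))
  have hK : 0 ≤ (κ * γi * τ1 ^ (-γi - 1))⁻¹ := by
    have := Real.rpow_pos_of_pos (by linarith : (0:ℝ) < τ1) (-γi - 1)
    positivity
  refine ⟨_, τ0 - τ1, τ2, hK, by linarith, by linarith, ?_⟩
  filter_upwards [nhdsWithin_le_nhds ((eventually_Pe_lt (γc := γc) hτ1κ).and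
    (eventually_Pe_lt (γc := γc) hτ2pf1)), self_mem_nhdsWithin] with ε ⟨hτ1ε, hτ2ε⟩ (hε : 0 < ε)
    T hT
  have hcong : ∀ x, κ ≤ x → 0 < x ∧ T x < τ1 := fun x hx =>
    ⟨hκ.trans_le hx, (hT.lt_iff_Pe_lt hκ hγi hγc hε (hκ.trans_le hx) hτ1).2 (hτ1ε.trans_le hx)⟩
  refine ⟨fun x hx => (hT.hasDerivAt hκ hγi hγc hε (hcong x hx).1).differentiableAt,
    fun x hx => hT.deriv_mem_Icc hκ hγi hγc hε (hcong x hx).1 (hcong x hx).2.le, ?_⟩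
  rintro x hxκ q ⟨hq1, hq2⟩
  have hq := hpf1.trans_le hq1
  have hTq0 : τ0 < T q := (hT.lt_iff_lt_Pe hκ hγi hγc hε hq hτ0).2
    (hq2.trans_lt (hτ0pf2.trans (lt_Pe hε hτ0)))
  have hTq2 : T q < τ2 := (hT.lt_iff_Pe_lt hκ hγi hγc hε hq hτ2).2 (hτ2ε.trans_le hq1)
  have hTx := (hT x (hcong x hxκ).1).1
  constructor <;> linarith [(hcong x hxκ).2]

/-- The velocity drop across a 2-shock from pressure `x` down to pressure `q`. -/
noncomputable def shockDrop (T : ℝ → ℝ) (q x : ℝ) : ℝ := √((T q - T x) * (x - q))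

section WaveMaps

variable (T : ℝ → ℝ)

@[simp] lemma Phi1_fst (σ : ℝ) (U : ℝ × ℝ) : (Phi1 T σ U).1 = U.1 + σ := by
  unfold Phi1; split_ifs <;> rfl

@[simp] lemma Phi2_fst (σ : ℝ) (U : ℝ × ℝ) : (Phi2 T σ U).1 = U.1 + σ := by
  unfold Phi2; split_ifs <;> rfl

@[simp] lemma Phi1_zero (U : ℝ × ℝ) : Phi1 T 0 U = U := by
  simp [Phi1]

lemma Phi2_sub_of_lt {q : ℝ} {U : ℝ × ℝ} (h : q < U.1) :
    Phi2 T (q - U.1) U = (q, U.2 - shockDrop T q U.1) := by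
  rw [Phi2, if_pos (sub_neg.2 h), add_sub_cancel, neg_sub, shockDrop]

lemma Phi1_snd_of_neg {σ : ℝ} (hσ : σ < 0) (U : ℝ × ℝ) :
    (Phi1 T σ U).2 = U.2 + ∫ ξ in (U.1 + σ)..U.1, √(-deriv T ξ) := by
  rw [Phi1, if_neg hσ.not_ge, intervalIntegral.integral_symm, sub_eq_add_neg, neg_neg]

lemma Phi2_sub_Phi1 (U : ℝ × ℝ) {q σ : ℝ} (h : q < U.1 + σ) :
    Phi2 T (q - (U.1 + σ)) (Phi1 T σ U) = (q, (Phi1 T σ U).2 - shockDrop T q (U.1 + σ)) := by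
  simpa only [Phi1_fst] using Phi2_sub_of_lt T (U := Phi1 T σ U) (by simpa only [Phi1_fst])

lemma eq_Phi2_Phi1_iff {U V : ℝ × ℝ} {σ1 σ2 : ℝ} (h : V.1 < U.1 + σ1) :
    V = Phi2 T σ2 (Phi1 T σ1 U) ↔
      σ2 = V.1 - (U.1 + σ1) ∧ V.2 = (Phi1 T σ1 U).2 - shockDrop T V.1 (U.1 + σ1) := by
  constructor
  · intro hV
    obtain rfl : σ2 = V.1 - (U.1 + σ1) := by rw [hV]; simp
    rw [Phi2_sub_Phi1 T U h] at hV
    exact ⟨rfl, congrArg Prod.snd hV⟩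
  · rintro ⟨rfl, h2⟩
    rw [Phi2_sub_Phi1 T U h]
    exact Prod.ext rfl h2

end WaveMaps

namespace FreeCongestedBounds

variable {T : ℝ → ℝ} {κ pf1 pf2 K m M : ℝ} (hT : FreeCongestedBounds T κ pf1 pf2 K m M)
include hT

lemma K_nonneg : 0 ≤ K := by
  linarith [(hT.deriv_mem κ le_rfl).1, (hT.deriv_mem κ le_rfl).2]

lemma continuousOn : ContinuousOn T (Ici κ) := fun x hx =>
  (hT.differentiableAt x hx).continuousAt.continuousWithinAt

lemma antitoneOn : AntitoneOn T (Ici κ) :=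
  antitoneOn_of_deriv_nonpos (convex_Ici κ) hT.continuousOn
    (fun x hx => (hT.differentiableAt x (interior_subset hx)).differentiableWithinAt)
    (fun x hx => (hT.deriv_mem x (interior_subset hx)).2)

lemma abs_sub_le {x y : ℝ} (hx : κ ≤ x) (hy : κ ≤ y) : |T y - T x| ≤ K * |y - x| := by
  have hbound : ∀ z ∈ Ici κ, ‖deriv T z‖ ≤ K := fun z hz => by
    have h := hT.deriv_mem z hz
    rw [Real.norm_eq_abs, abs_le]
    constructor <;> linarith [h.1, h.2]
  simpa only [Real.norm_eq_abs] using
    (convex_Ici κ).norm_image_sub_le_of_norm_deriv_le (f := T) hT.differentiableAt hbound hx hy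

lemma sqrt_neg_deriv_le {ξ : ℝ} (hξ : κ ≤ ξ) : √(-deriv T ξ) ≤ √K :=
  Real.sqrt_le_sqrt (by linarith [(hT.deriv_mem ξ hξ).1])

lemma abs_integral_sqrt_neg_deriv_le {x y : ℝ} (hx : κ ≤ x) (hy : κ ≤ y) :
    |∫ ξ in x..y, √(-deriv T ξ)| ≤ √K * |y - x| := by
  rw [← Real.norm_eq_abs]
  refine intervalIntegral.norm_integral_le_of_norm_le_const fun ξ hξ => ?_
  rw [Real.norm_eq_abs, abs_of_nonneg (Real.sqrt_nonneg _)]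
  exact hT.sqrt_neg_deriv_le ((le_min hx hy).trans hξ.1.le)

lemma intervalIntegrable_sqrt_neg_deriv {x y : ℝ} (hx : κ ≤ x) (hy : κ ≤ y) :
    IntervalIntegrable (fun ξ => √(-deriv T ξ)) volume x y := by
  refine (intervalIntegrable_const (c := √K)).mono_fun'
    (measurable_deriv T).neg.sqrt.aestronglyMeasurable
    ((ae_restrict_iff' measurableSet_uIoc).2 (ae_of_all _ fun ξ hξ => ?_))
  show ‖√(-deriv T ξ)‖ ≤ √K
  rw [Real.norm_eq_abs, abs_of_nonneg (Real.sqrt_nonneg _)]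
  exact hT.sqrt_neg_deriv_le ((le_min hx hy).trans hξ.1.le)

lemma antitoneOn_Phi1_snd {U : ℝ × ℝ} (hU : κ ≤ U.1) :
    AntitoneOn (fun t => (Phi1 T t U).2) (Ici (κ - U.1)) := by
  intro s (hs : κ - U.1 ≤ s) t (ht : κ - U.1 ≤ t) hst
  show (Phi1 T t U).2 ≤ (Phi1 T s U).2
  have hrare : ∀ σ, σ < 0 → U.2 ≤ (Phi1 T σ U).2 := fun σ hσ => by
    rw [Phi1_snd_of_neg T hσ]
    linarith [intervalIntegral.integral_nonneg (μ := volume) (by linarith : U.1 + σ ≤ U.1)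
      fun ξ _ => Real.sqrt_nonneg (-deriv T ξ)]
  rcases lt_or_ge s 0 with hs0 | hs0
  · rcases lt_or_ge t 0 with ht0 | ht0
    · rw [Phi1_snd_of_neg T hs0, Phi1_snd_of_neg T ht0]
      gcongr
      exact intervalIntegral.integral_mono_interval (by linarith) (by linarith) le_rfl
        (ae_of_all _ fun ξ => Real.sqrt_nonneg _)
        (hT.intervalIntegrable_sqrt_neg_deriv (by linarith) hU)
    · refine le_trans ?_ (hrare s hs0)
      simp only [Phi1, if_pos ht0]
      linarith [Real.sqrt_nonneg ((T U.1 - T (U.1 + t)) * t)]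
  · simp only [Phi1, if_pos hs0, if_pos (hs0.trans hst)]
    have hmono := hT.antitoneOn (show κ ≤ U.1 + s by linarith) (show κ ≤ U.1 + t by linarith)
      (by linarith)
    have hpos := hT.antitoneOn (show κ ≤ U.1 by linarith) (show κ ≤ U.1 + s by linarith)
      (by linarith)
    have := Real.sqrt_le_sqrt (mul_le_mul (sub_le_sub_left hmono (T U.1)) hst hs0 (by linarith))
    linarith

lemma continuousOn_Phi1_snd {U : ℝ × ℝ} (hU : κ ≤ U.1) :
    ContinuousOn (fun t => (Phi1 T t U).2) (Ici (κ - U.1)) := by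
  have hreg : MapsTo (fun t => U.1 + t) (Ici (κ - U.1)) (Ici κ) := fun t (ht : κ - U.1 ≤ t) =>
    show κ ≤ U.1 + t by linarith
  have hshock : ContinuousOn (fun t => U.2 - √((T U.1 - T (U.1 + t)) * t)) (Ici (κ - U.1)) :=
    continuousOn_const.sub (((continuousOn_const.sub
      (hT.continuousOn.comp (by fun_prop) hreg)).mul continuousOn_id).sqrt)
  have hrare : ContinuousOn (fun t => U.2 - ∫ ξ in U.1..(U.1 + t), √(-deriv T ξ))
      (Ici (κ - U.1)) := by
    refine continuousOn_const.sub
      (LipschitzOnWith.of_dist_le' (K := √K) fun s hs t ht => ?_).continuousOn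
    rw [Real.dist_eq, Real.dist_eq, intervalIntegral.integral_interval_sub_left
      (hT.intervalIntegrable_sqrt_neg_deriv hU (hreg hs))
      (hT.intervalIntegrable_sqrt_neg_deriv hU (hreg ht))]
    simpa only [add_sub_add_left_eq_sub, abs_sub_comm t s] using
      hT.abs_integral_sqrt_neg_deriv_le (hreg ht) (hreg hs)
  have heq : (fun t => (Phi1 T t U).2) = fun t => if 0 ≤ t
      then U.2 - √((T U.1 - T (U.1 + t)) * t)
      else U.2 - ∫ ξ in U.1..(U.1 + t), √(-deriv T ξ) :=
    funext fun t => by unfold Phi1; split_ifs <;> rfl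
  rw [heq]
  refine ContinuousOn.if (fun t ht => ?_) (hshock.mono inter_subset_left)
    (hrare.mono inter_subset_left)
  have ht0 : t ∈ frontier (Ici (0 : ℝ)) := ht.2
  rw [frontier_Ici, mem_singleton_iff] at ht0
  simp [ht0]

lemma abs_Phi2_snd_sub_le {U : ℝ × ℝ} {σ : ℝ} (hU : κ ≤ U.1) (hσ : κ ≤ U.1 + σ) :
    |(Phi2 T σ U).2 - U.2| ≤ √K * |σ| := by
  unfold Phi2
  split_ifs with h
  · have hlip := hT.abs_sub_le hU hσ
    rw [add_sub_cancel_left] at hlip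
    dsimp only
    rw [sub_sub_cancel_left, abs_neg, abs_of_nonneg (Real.sqrt_nonneg _),
      Real.sqrt_le_left (mul_nonneg (Real.sqrt_nonneg K) (abs_nonneg σ))]
    calc (T (U.1 + σ) - T U.1) * -σ ≤ (K * |σ|) * |σ| :=
          mul_le_mul ((le_abs_self _).trans hlip) (neg_le_abs σ) (by linarith)
            (mul_nonneg hT.K_nonneg (abs_nonneg σ))
      _ = (√K * |σ|) ^ 2 := by rw [mul_pow, Real.sq_sqrt hT.K_nonneg]; ring
  · simpa only [add_sub_cancel_left] using hT.abs_integral_sqrt_neg_deriv_le hU hσ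

section ShockDrop

variable (hpf2 : pf2 < κ) {q : ℝ} (hq : q ∈ Icc pf1 pf2)
include hpf2 hq

lemma mul_sub_le_radicand_sub {x y : ℝ} (hx : κ ≤ x) (hxy : x ≤ y) :
    m * (y - x) ≤ (T q - T y) * (y - q) - (T q - T x) * (x - q) := by
  have hTxy := hT.antitoneOn hx (hx.trans hxy) hxy
  have hgap := (hT.sub_mem x hx q hq).1
  have : 0 ≤ (T x - T y) * (y - q) := mul_nonneg (by linarith) (by linarith [hq.2])
  nlinarith [mul_le_mul_of_nonneg_right hgap (sub_nonneg.2 hxy)]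

lemma radicand_mem_Icc (hm : 0 < m) {x pM : ℝ} (hx : x ∈ Icc κ pM) :
    (T q - T x) * (x - q) ∈ Icc (m * (κ - pf2)) (M * (pM - pf1)) := by
  have hgap := hT.sub_mem x hx.1 q hq
  constructor
  · exact mul_le_mul hgap.1 (by linarith [hq.2, hx.1]) (by linarith) (by linarith [hgap.1])
  · exact mul_le_mul hgap.2 (by linarith [hq.1, hx.2]) (by linarith [hq.2, hx.1])
      (by linarith [hgap.1, hgap.2])

lemma shockDrop_strictMonoOn (hm : 0 < m) : StrictMonoOn (shockDrop T q) (Ici κ) := by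
  intro x (hx : κ ≤ x) y _ hxy
  have hinc := hT.mul_sub_le_radicand_sub hpf2 hq hx hxy.le
  have hrx := (hT.radicand_mem_Icc hpf2 hq hm (⟨hx, le_rfl⟩ : x ∈ Icc κ x)).1
  exact Real.sqrt_lt_sqrt (by nlinarith) (by nlinarith)

lemma mul_sub_le_shockDrop_sub (hm : 0 < m) {x y pM : ℝ} (hx : κ ≤ x) (hxy : x ≤ y)
    (hy : y ≤ pM) :
    m / (2 * √(M * (pM - pf1))) * (y - x) ≤ shockDrop T q y - shockDrop T q x := by
  have hrx := (hT.radicand_mem_Icc hpf2 hq hm ⟨hx, hxy.trans hy⟩).1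
  have hry := (hT.radicand_mem_Icc hpf2 hq hm ⟨hx.trans hxy, hy⟩).2
  have hinc := hT.mul_sub_le_radicand_sub hpf2 hq hx hxy
  have hpos : 0 ≤ m * (κ - pf2) := (mul_pos hm (sub_pos.2 hpf2)).le
  rw [div_mul_eq_mul_div]
  exact (div_le_div_of_nonneg_right hinc (by positivity)).trans
    (sub_div_le_sqrt_sub_sqrt (hpos.trans hrx)
      (by linarith [mul_nonneg hm.le (sub_nonneg.2 hxy)]) hry)

lemma abs_shockDrop_sub_le (hm : 0 < m) {x y pM : ℝ} (hx : x ∈ Icc κ pM) (hy : y ∈ Icc κ pM) :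
    |shockDrop T q y - shockDrop T q x| ≤
      (K * (pM - pf1) + M) / (2 * √(m * (κ - pf2))) * |y - x| := by
  have hgap := hT.sub_mem x hx.1 q hq
  have hrad : |(T q - T y) * (y - q) - (T q - T x) * (x - q)| ≤
      (K * (pM - pf1) + M) * |y - x| := by
    rw [show (T q - T y) * (y - q) - (T q - T x) * (x - q) =
      (T x - T y) * (y - q) + (T q - T x) * (y - x) by ring]
    have h1 : |(T x - T y) * (y - q)| ≤ K * |y - x| * (pM - pf1) := by
      rw [abs_mul, abs_sub_comm (T x), abs_of_nonneg (show 0 ≤ y - q by linarith [hq.2, hy.1])]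
      exact mul_le_mul (hT.abs_sub_le hx.1 hy.1) (by linarith [hq.1, hy.2])
        (by linarith [hq.2, hy.1]) (mul_nonneg hT.K_nonneg (abs_nonneg _))
    have h2 : |(T q - T x) * (y - x)| ≤ M * |y - x| := by
      rw [abs_mul, abs_of_nonneg (by linarith [hgap.1])]
      exact mul_le_mul_of_nonneg_right hgap.2 (abs_nonneg _)
    linarith [abs_add_le ((T x - T y) * (y - q)) ((T q - T x) * (y - x))]
  calc |shockDrop T q y - shockDrop T q x|
      ≤ |(T q - T y) * (y - q) - (T q - T x) * (x - q)| / (2 * √(m * (κ - pf2))) :=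
        abs_sqrt_sub_sqrt_le (mul_pos hm (sub_pos.2 hpf2))
          (hT.radicand_mem_Icc hpf2 hq hm hx).1 (hT.radicand_mem_Icc hpf2 hq hm hy).1
    _ ≤ (K * (pM - pf1) + M) * |y - x| / (2 * √(m * (κ - pf2))) := by gcongr
    _ = _ := by ring

end ShockDrop

lemma continuousOn_shockDrop (q : ℝ) : ContinuousOn (shockDrop T q) (Ici κ) :=
  ((continuousOn_const.sub hT.continuousOn).mul (continuousOn_id.sub continuousOn_const)).sqrt

lemma abs_snd_sub_shockDrop_le {L : ℝ} {Ul Um Ur : ℝ × ℝ} {σ' σb'' : ℝ} (hUl : κ ≤ Ul.1)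
    (hUm : κ ≤ Um.1)
    (hlip : |shockDrop T Ur.1 Um.1 - shockDrop T Ur.1 Ul.1| ≤ L * |Um.1 - Ul.1|)
    (hUm_eq : Um = Phi2 T σ' Ul) (hσb'' : σb'' < 0) (hUr_eq : Ur = Phi2 T σb'' Um) :
    |Ur.2 - (Ul.2 - shockDrop T Ur.1 Ul.1)| ≤ (√K + L) * |σ'| := by
  have hUm1 : Um.1 = Ul.1 + σ' := by rw [hUm_eq, Phi2_fst]
  have hUr1 : Ur.1 = Um.1 + σb'' := by rw [hUr_eq, Phi2_fst]
  have hUr2 : Ur.2 = Um.2 - shockDrop T Ur.1 Um.1 := by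
    have := Phi2_sub_of_lt T (q := Ur.1) (U := Um) (by linarith)
    rw [show Ur.1 - Um.1 = σb'' by linarith, ← hUr_eq] at this
    exact congrArg Prod.snd this
  have hwave := hT.abs_Phi2_snd_sub_le hUl (hUm1 ▸ hUm)
  rw [← hUm_eq] at hwave
  rw [show Um.1 - Ul.1 = σ' by linarith] at hlip
  rw [hUr2, show Um.2 - shockDrop T Ur.1 Um.1 - (Ul.2 - shockDrop T Ur.1 Ul.1) =
    (Um.2 - Ul.2) - (shockDrop T Ur.1 Um.1 - shockDrop T Ur.1 Ul.1) by ring]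
  linarith [abs_sub (Um.2 - Ul.2) (shockDrop T Ur.1 Um.1 - shockDrop T Ur.1 Ul.1)]

section Interaction

variable (hpf2 : pf2 < κ)
include hpf2

lemma strictAntiOn_Phi1_snd_sub_shockDrop (hm : 0 < m) {U : ℝ × ℝ} (hU : κ ≤ U.1) {q : ℝ}
    (hq : q ∈ Icc pf1 pf2) :
    StrictAntiOn (fun t => (Phi1 T t U).2 - shockDrop T q (U.1 + t)) (Ici (κ - U.1)) := by
  intro s (hs : κ - U.1 ≤ s) t (ht : κ - U.1 ≤ t) hst
  have h1 := hT.antitoneOn_Phi1_snd hU hs ht hst.le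
  have h2 := hT.shockDrop_strictMonoOn hpf2 hq hm (show κ ≤ U.1 + s by linarith)
    (show κ ≤ U.1 + t by linarith) (by linarith)
  simp only at h1 ⊢
  linarith

lemma interaction_unique (hm : 0 < m) {Ul V : ℝ × ℝ} (hUl : κ ≤ Ul.1) (hV : V.1 ∈ Icc pf1 pf2)
    {σ1 σ2 τ1 τ2 : ℝ} (hσ : V = Phi2 T σ2 (Phi1 T σ1 Ul)) (hσ1 : κ < Ul.1 + σ1)
    (hτ : V = Phi2 T τ2 (Phi1 T τ1 Ul)) (hτ1 : κ < Ul.1 + τ1) :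
    τ1 = σ1 ∧ τ2 = σ2 := by
  have hVκ : V.1 < κ := hV.2.trans_lt hpf2
  obtain ⟨hσ2, hσV⟩ := (eq_Phi2_Phi1_iff T (hVκ.trans hσ1)).1 hσ
  obtain ⟨hτ2, hτV⟩ := (eq_Phi2_Phi1_iff T (hVκ.trans hτ1)).1 hτ
  have h1 : τ1 = σ1 := (hT.strictAntiOn_Phi1_snd_sub_shockDrop hpf2 hm hUl hV).injOn
    (show κ - Ul.1 ≤ τ1 by linarith) (show κ - Ul.1 ≤ σ1 by linarith) (hτV.symm.trans hσV)
  exact ⟨h1, by rw [hσ2, hτ2, h1]⟩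

lemma exists_interaction {pc1 pc2 c L : ℝ} (hpc1 : κ < pc1) (hc : 0 < c)
    {Ul Um Ur : ℝ × ℝ} {σ' σb'' : ℝ}
    (hslope : ∀ x y, κ ≤ x → x ≤ y → y ≤ pc2 + (pc1 - κ) →
      c * (y - x) ≤ shockDrop T Ur.1 y - shockDrop T Ur.1 x)
    (hlip : |shockDrop T Ur.1 Um.1 - shockDrop T Ur.1 Ul.1| ≤ L * |Um.1 - Ul.1|)
    (hUl : Ul.1 ∈ Icc pc1 pc2) (hUm : κ ≤ Um.1) (hUr : Ur.1 ∈ Icc pf1 pf2)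
    (hUm_eq : Um = Phi2 T σ' Ul) (hσ' : (√K + L) * |σ'| < c * (pc1 - κ)) (hσb'' : σb'' < 0)
    (hUr_eq : Ur = Phi2 T σb'' Um) :
    ∃ σ1, Ur = Phi2 T (Ur.1 - (Ul.1 + σ1)) (Phi1 T σ1 Ul) ∧ κ < Ul.1 + σ1 ∧
      c * |σ1| ≤ (√K + L) * |σ'| := by
  set w : ℝ → ℝ := fun t => (Phi1 T t Ul).2 - shockDrop T Ur.1 (Ul.1 + t) with hw
  have hUlκ : κ ≤ Ul.1 := hpc1.le.trans hUl.1
  have hnear : |Ur.2 - w 0| ≤ (√K + L) * |σ'| := by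
    simpa only [hw, Phi1_zero, add_zero] using
      hT.abs_snd_sub_shockDrop_le hUlκ hUm hlip hUm_eq hσb'' hUr_eq
  set r := (√K + L) * |σ'| / c
  have hr : r < pc1 - κ := by rw [div_lt_iff₀ hc]; linarith
  have hmem : ∀ t ∈ Icc (0 - r) (0 + r), κ < Ul.1 + t ∧ Ul.1 + t ≤ pc2 + (pc1 - κ) :=
    fun t ht => ⟨by linarith [ht.1, hUl.1], by linarith [ht.2, hUl.2]⟩
  have hcont : ContinuousOn w (Icc (0 - r) (0 + r)) :=
    ((hT.continuousOn_Phi1_snd hUlκ).sub ((hT.continuousOn_shockDrop Ur.1).comp (by fun_prop)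
      fun t (ht : κ - Ul.1 ≤ t) => show κ ≤ Ul.1 + t by linarith)).mono
        fun t ht => show κ - Ul.1 ≤ t by linarith [(hmem t ht).1]
  have hdecr : ∀ u ∈ Icc (0 - r) (0 + r), ∀ v ∈ Icc (0 - r) (0 + r), u ≤ v →
      c * (v - u) ≤ w u - w v := by
    intro u hu v hv huv
    have h1 := hT.antitoneOn_Phi1_snd hUlκ (show κ - Ul.1 ≤ u by linarith [(hmem u hu).1])
      (show κ - Ul.1 ≤ v by linarith [(hmem v hv).1]) huv
    have h2 := hslope _ _ (hmem u hu).1.le (by linarith) (hmem v hv).2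
    simp only [hw] at h1 ⊢
    linarith
  obtain ⟨σ1, hσ1r, hwσ1, hσ1⟩ := exists_eq_of_mul_sub_le_sub hc hcont hdecr
    (hnear.trans_eq (mul_div_cancel₀ _ hc.ne').symm)
  rw [sub_zero] at hσ1
  have hκσ1 := (hmem σ1 hσ1r).1
  exact ⟨σ1, (eq_Phi2_Phi1_iff T (by linarith [hUr.2])).2 ⟨rfl, hwσ1.symm⟩, hκσ1,
    hσ1.trans hnear⟩

end Interaction

end FreeCongestedBounds

lemma exists_uniform_interaction {κ pf1 pf2 pc1 pc2 K m M : ℝ} (hK : 0 ≤ K) (hm : 0 < m)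
    (hM : 0 < M) (hpf12 : pf1 < pf2) (hpf2 : pf2 < κ) (hpc1 : κ < pc1) (hpc12 : pc1 < pc2) :
    ∃ C δ : ℝ, 0 < C ∧ 0 < δ ∧ ∀ T : ℝ → ℝ, FreeCongestedBounds T κ pf1 pf2 K m M →
      ∀ Ul Um Ur : ℝ × ℝ, ∀ σ' σb'' : ℝ,
        Ul.1 ∈ Icc pc1 pc2 → Um.1 ∈ Icc pc1 pc2 → Ur.1 ∈ Icc pf1 pf2 →
        Um = Phi2 T σ' Ul → |σ'| < δ → σb'' < 0 → Ur = Phi2 T σb'' Um →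
        ∃ σ1 σb2 : ℝ, σb2 < 0 ∧ Ur = Phi2 T σb2 (Phi1 T σ1 Ul) ∧ κ < (Phi1 T σ1 Ul).1 ∧
          |σ1| + |σb2 - σb''| ≤ C * |σ'| := by
  set pM := pc2 + (pc1 - κ)
  -- `c` bounds the slope of the shock drop on `[κ, pM]` from below, `L` is its Lipschitz constant
  set c := m / (2 * √(M * (pM - pf1)))
  set L := (K * (pM - pf1) + M) / (2 * √(m * (κ - pf2)))
  have hpM : 0 < pM - pf1 := by linarith
  have hc : 0 < c := div_pos hm (by positivity)
  have hL : 0 < √K + L := by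
    have : 0 < m * (κ - pf2) := mul_pos hm (by linarith)
    positivity
  refine ⟨1 + 2 * ((√K + L) / c), c * (pc1 - κ) / (√K + L), by positivity,
    div_pos (mul_pos hc (by linarith)) hL, ?_⟩
  intro T hT Ul Um Ur σ' σb'' hUl hUm hUr hUm_eq hσ' hσb'' hUr_eq
  obtain ⟨σ1, hUr_eq', hκσ1, hσ1⟩ := hT.exists_interaction hpf2 hpc1 hc
    (fun x y hx hxy hy => hT.mul_sub_le_shockDrop_sub hpf2 hUr hm hx hxy hy)
    (hT.abs_shockDrop_sub_le hpf2 hUr hm (pM := pM) ⟨by linarith [hUl.1], by linarith [hUl.2]⟩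
      ⟨by linarith [hUm.1], by linarith [hUm.2]⟩)
    hUl (by linarith [hUm.1]) hUr hUm_eq (by rwa [lt_div_iff₀ hL, mul_comm] at hσ') hσb'' hUr_eq
  have hUm1 : Um.1 = Ul.1 + σ' := by rw [hUm_eq, Phi2_fst]
  have hUr1 : Ur.1 = Um.1 + σb'' := by rw [hUr_eq, Phi2_fst]
  refine ⟨σ1, Ur.1 - (Ul.1 + σ1), by linarith [hUr.2], hUr_eq', by rwa [Phi1_fst], ?_⟩
  have hσ1' : |σ1| ≤ (√K + L) / c * |σ'| := by rw [div_mul_eq_mul_div, le_div_iff₀ hc]; linarith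
  calc |σ1| + |Ur.1 - (Ul.1 + σ1) - σb''| = |σ1| + |σ' - σ1| := by
        congr 2; linarith
    _ ≤ |σ'| + 2 * |σ1| := by linarith [abs_sub σ' σ1]
    _ ≤ _ := by linarith

/-- Interaction of the 2-shock interface with a small 2-wave coming from the left
(congested) domain: the outgoing pattern is a 1-wave of strength `σ₁⁺` connecting
congested states and a 2-shock interface of strength `σ̄₂⁺ < 0`, unique, with
`|σ₁⁺| + |σ̄₂⁺ − σ̄''| ≤ C|σ'|`, with `C` independent of `ε`. -/
theorem stmt15 (κ γi γc pf1 pf2 pc1 pc2 : ℝ)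
    (hκ : 0 < κ) (hγi : 1 < γi) (hγc : 1 < γc)
    (hpf1 : 0 < pf1) (hpf12 : pf1 < pf2) (hpf2 : pf2 < κ)
    (hpc1 : κ < pc1) (hpc12 : pc1 < pc2)
    (T : ℝ → ℝ → ℝ)
    (hT : ∀ ε > (0:ℝ), ∀ p > (0:ℝ), 1 < T ε p ∧ Pe κ γi γc ε (T ε p) = p) :
    ∃ C δ εb : ℝ, 0 < C ∧ 0 < δ ∧ 0 < εb ∧
      ∀ ε, 0 < ε → ε < εb →
        ∀ Ul Um Ur : ℝ × ℝ, ∀ σ' σb'' : ℝ,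
          Ul.1 ∈ Icc pc1 pc2 → Um.1 ∈ Icc pc1 pc2 → Ur.1 ∈ Icc pf1 pf2 →
          Um = Phi2 (T ε) σ' Ul → |σ'| < δ →
          σb'' < 0 → Ur = Phi2 (T ε) σb'' Um →
          ∃ σ1 σb2 : ℝ, σb2 < 0 ∧
            Ur = Phi2 (T ε) σb2 (Phi1 (T ε) σ1 Ul) ∧
            κ < (Phi1 (T ε) σ1 Ul).1 ∧
            |σ1| + |σb2 - σb''| ≤ C * |σ'| ∧
            ∀ τ1 τ2 : ℝ, τ2 < 0 → Ur = Phi2 (T ε) τ2 (Phi1 (T ε) τ1 Ul) →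
              κ < (Phi1 (T ε) τ1 Ul).1 → τ1 = σ1 ∧ τ2 = σb2 := by
  obtain ⟨K, m, M, hK, hm, hM, hbounds⟩ :=
    exists_freeCongestedBounds (γi := γi) (γc := γc) hκ (by linarith) (by linarith) hpf1 hpf2
  obtain ⟨C, δ, hC, hδ, hinteraction⟩ :=
    exists_uniform_interaction hK hm hM hpf12 hpf2 hpc1 hpc12
  obtain ⟨εb, hεb, hbounds⟩ := (nhdsGT_basis (0:ℝ)).eventually_iff.1 hbounds
  refine ⟨C, δ, εb, hC, hδ, hεb, fun ε hε hεεb Ul Um Ur σ' σb'' hUl hUm hUr hUm_eq hσ' hσb''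
    hUr_eq => ?_⟩
  have hTε := hbounds ⟨hε, hεεb⟩ (T ε) (hT ε hε)
  obtain ⟨σ1, σb2, hσb2, hUr_eq', hκσ1, hest⟩ :=
    hinteraction (T ε) hTε Ul Um Ur σ' σb'' hUl hUm hUr hUm_eq hσ' hσb'' hUr_eq
  refine ⟨σ1, σb2, hσb2, hUr_eq', hκσ1, hest, fun τ1 τ2 _ hτ hκτ1 => ?_⟩
  rw [Phi1_fst] at hκσ1 hκτ1
  exact hTε.interaction_unique hpf2 hm (hpc1.le.trans hUl.1) hUr hUr_eq' hκσ1 hτ hκτ1
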